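/- arXiv:1610.06537 — 6 statements merged into one kernel-verified Lean document; each statement's English description precedes it below -/
import Mathlib

section
/- For the n-peakon function u(x) = Σ_{j=1}^n m_j e^{-|x-x_j|} with distinct points x_j, the squared H¹ norm satisfies ∫_ℝ (u² + uₓ²) dx = Σ_{j=1}^n 2 m_j u(x_j) = Σ_{j,k=1}^n 2 m_j m_k e^{-|x_j - x_k|}. -/
/-!
The integrand `(∑ⱼ mⱼ φⱼ)² + (∑ⱼ mⱼ φⱼ')²`, with `φⱼ(x) = e^{-|x - xⱼ|}`, expands bilinearly into the
pairwise `H¹` products `φⱼ φₖ + φⱼ' φₖ'`. For `a ≤ b` the product of the peakons at `a` and `b`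
vanishes between the crests and is `2 e^{2x-a-b}`, resp. `2 e^{a+b-2x}`, outside, so it integrates
to `2 e^{-|a-b|}`. Off the finite (hence null) set of crests `uₓ` is the sum of the `mⱼ φⱼ'`.
-/

open Real MeasureTheory Set

noncomputable def peakon (a x : ℝ) : ℝ := exp (-|x - a|)

/-- The derivative of `peakon a` off the crest; at `x = a` it is the right derivative `-1`. -/
noncomputable def peakonDeriv (a x : ℝ) : ℝ := if x < a then exp (x - a) else -exp (a - x)

lemma peakon_of_le {a x : ℝ} (h : x ≤ a) : peakon a x = exp (x - a) := by
  rw [peakon, abs_of_nonpos (sub_nonpos.2 h), neg_neg]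

lemma peakon_of_ge {a x : ℝ} (h : a ≤ x) : peakon a x = exp (a - x) := by
  rw [peakon, abs_of_nonneg (sub_nonneg.2 h), neg_sub]

lemma peakonDeriv_of_lt {a x : ℝ} (h : x < a) : peakonDeriv a x = exp (x - a) := if_pos h

lemma peakonDeriv_of_ge {a x : ℝ} (h : a ≤ x) : peakonDeriv a x = -exp (a - x) :=
  if_neg h.not_gt

lemma norm_peakon (a x : ℝ) : ‖peakon a x‖ = peakon a x :=
  Real.norm_of_nonneg (exp_pos _).le

lemma peakon_le_one (a x : ℝ) : peakon a x ≤ 1 :=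
  exp_le_one_iff.2 (neg_nonpos.2 (abs_nonneg _))

lemma norm_peakonDeriv (a x : ℝ) : ‖peakonDeriv a x‖ = peakon a x := by
  rcases lt_or_ge x a with h | h
  · rw [peakonDeriv_of_lt h, peakon_of_le h.le, Real.norm_of_nonneg (exp_pos _).le]
  · rw [peakonDeriv_of_ge h, peakon_of_ge h, norm_neg, Real.norm_of_nonneg (exp_pos _).le]

lemma continuous_peakon (a : ℝ) : Continuous (peakon a) := by
  unfold peakon; fun_prop

lemma measurable_peakonDeriv (a : ℝ) : Measurable (peakonDeriv a) :=
  Measurable.ite measurableSet_Iio (by fun_prop) (by fun_prop)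

lemma hasDerivAt_peakon {a x : ℝ} (h : x ≠ a) : HasDerivAt (peakon a) (peakonDeriv a x) x := by
  rcases h.lt_or_gt with h | h
  · rw [peakonDeriv_of_lt h]
    have hexp : HasDerivAt (fun y => exp (y - a)) (exp (x - a)) x := by
      simpa using ((hasDerivAt_id x).sub_const a).exp
    refine hexp.congr_of_eventuallyEq ?_
    filter_upwards [Iio_mem_nhds h] with y hy using peakon_of_le hy.le
  · rw [peakonDeriv_of_ge h.le]
    have hexp : HasDerivAt (fun y => exp (a - y)) (-exp (a - x)) x := by
      simpa using ((hasDerivAt_id x).const_sub a).exp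
    refine hexp.congr_of_eventuallyEq ?_
    filter_upwards [Ioi_mem_nhds h] with y hy using peakon_of_ge hy.le

lemma integrable_peakon (a : ℝ) : Integrable (peakon a) := by
  have h0 : Integrable (fun x : ℝ => exp (-|x|)) := by
    rw [← integrableOn_univ, ← Iic_union_Ioi (a := 0)]
    refine IntegrableOn.union ?_ ?_
    · refine (integrableOn_exp_mul_Iic one_pos 0).congr_fun (fun x hx => ?_) measurableSet_Iic
      simp only [abs_of_nonpos (mem_Iic.1 hx), neg_neg, one_mul]
    · refine (integrableOn_exp_mul_Ioi neg_one_lt_zero 0).congr_fun (fun x hx => ?_)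
        measurableSet_Ioi
      simp only [abs_of_pos (mem_Ioi.1 hx), neg_one_mul]
  exact h0.comp_sub_right a

lemma integrable_peakonDeriv (a : ℝ) : Integrable (peakonDeriv a) :=
  (integrable_norm_iff (measurable_peakonDeriv a).aestronglyMeasurable).1 <| by
    simpa only [norm_peakonDeriv] using integrable_peakon a

lemma integrable_peakon_mul_add_peakonDeriv_mul (a b : ℝ) :
    Integrable (fun x => peakon a x * peakon b x + peakonDeriv a x * peakonDeriv b x) :=
  ((integrable_peakon a).mul_bdd (continuous_peakon b).aestronglyMeasurable
    (ae_of_all _ fun x => (norm_peakon b x).trans_le (peakon_le_one b x))).add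
  ((integrable_peakonDeriv a).mul_bdd (measurable_peakonDeriv b).aestronglyMeasurable
    (ae_of_all _ fun x => (norm_peakonDeriv b x).trans_le (peakon_le_one b x)))

lemma integral_peakon_mul_add_peakonDeriv_mul_of_le {a b : ℝ} (hab : a ≤ b) :
    ∫ x, (peakon a x * peakon b x + peakonDeriv a x * peakonDeriv b x) = 2 * exp (a - b) := by
  set f := fun x => peakon a x * peakon b x + peakonDeriv a x * peakonDeriv b x
  have hf : Integrable f := integrable_peakon_mul_add_peakonDeriv_mul a b
  have left : ∫ x in Iio a, f x = exp (a - b) := by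
    have hEq : EqOn f (fun x => 2 * exp (-(a + b)) * exp (2 * x)) (Iio a) := fun x hx => by
      have hxa : x < a := hx
      simp only [f, peakon_of_le hxa.le, peakon_of_le (hxa.le.trans hab), peakonDeriv_of_lt hxa,
        peakonDeriv_of_lt (hxa.trans_le hab), ← exp_add]
      rw [mul_assoc, ← exp_add]
      ring_nf
    rw [setIntegral_congr_fun measurableSet_Iio hEq, ← integral_Iic_eq_integral_Iio,
      integral_const_mul, integral_exp_mul_Iic two_pos, mul_div_assoc', mul_assoc, ← exp_add]
    ring_nf
  have middle : ∫ x in Ico a b, f x = 0 := by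
    have hEq : EqOn f 0 (Ico a b) := fun x ⟨hax, hxb⟩ => by
      simp only [f, peakon_of_ge hax, peakon_of_le hxb.le, peakonDeriv_of_ge hax,
        peakonDeriv_of_lt hxb, Pi.zero_apply]
      ring
    rw [setIntegral_congr_fun measurableSet_Ico hEq, Pi.zero_def, integral_zero]
  have right : ∫ x in Ici b, f x = exp (a - b) := by
    have hEq : EqOn f (fun x => 2 * exp (a + b) * exp (-2 * x)) (Ici b) := fun x hx => by
      have hbx : b ≤ x := hx
      simp only [f, peakon_of_ge (hab.trans hbx), peakon_of_ge hbx, peakonDeriv_of_ge hbx,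
        peakonDeriv_of_ge (hab.trans hbx), neg_mul_neg, ← exp_add]
      rw [mul_assoc, ← exp_add]
      ring_nf
    rw [setIntegral_congr_fun measurableSet_Ici hEq, integral_Ici_eq_integral_Ioi,
      integral_const_mul, integral_exp_mul_Ioi (by norm_num), neg_div_neg_eq, mul_div_assoc',
      mul_assoc, ← exp_add]
    ring_nf
  calc ∫ x, f x = (∫ x in Iio a, f x) + ∫ x in Ici a, f x :=
        (intervalIntegral.integral_Iio_add_Ici hf.integrableOn hf.integrableOn).symm
    _ = (∫ x in Iio a, f x) + ((∫ x in Ico a b, f x) + ∫ x in Ici b, f x) := by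
        rw [← intervalIntegral.integral_Ici_sub_Ici hf.integrableOn hab, sub_add_cancel]
    _ = 2 * exp (a - b) := by rw [left, middle, right]; ring

lemma integral_peakon_mul_add_peakonDeriv_mul (a b : ℝ) :
    ∫ x, (peakon a x * peakon b x + peakonDeriv a x * peakonDeriv b x) =
      2 * exp (-|a - b|) := by
  rcases le_total a b with hab | hba
  · rw [integral_peakon_mul_add_peakonDeriv_mul_of_le hab,
      abs_of_nonpos (sub_nonpos.2 hab), neg_neg]
  · simp_rw [mul_comm (peakon a _), mul_comm (peakonDeriv a _)]
    rw [integral_peakon_mul_add_peakonDeriv_mul_of_le hba,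
      abs_of_nonneg (sub_nonneg.2 hba), neg_sub]

open Finset

section PeakonSum

variable {ι : Type*} [Fintype ι] (m X : ι → ℝ)

lemma hasDerivAt_sum_peakon {x : ℝ} (hx : ∀ j, x ≠ X j) :
    HasDerivAt (fun y => ∑ j, m j * peakon (X j) y) (∑ j, m j * peakonDeriv (X j) x) x :=
  HasDerivAt.fun_sum fun j _ => (hasDerivAt_peakon (hx j)).const_mul (m j)

lemma integral_sq_sum_peakon_add_sq_sum_peakonDeriv :
    ∫ x, ((∑ j, m j * peakon (X j) x) ^ 2 + (∑ j, m j * peakonDeriv (X j) x) ^ 2) =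
      ∑ j, ∑ k, 2 * m j * m k * exp (-|X j - X k|) := by
  have hexpand : ∀ x, (∑ j, m j * peakon (X j) x) ^ 2 + (∑ j, m j * peakonDeriv (X j) x) ^ 2 =
      ∑ j, ∑ k, m j * m k *
        (peakon (X j) x * peakon (X k) x + peakonDeriv (X j) x * peakonDeriv (X k) x) := by
    intro x
    rw [sq, sq, sum_mul_sum, sum_mul_sum, ← sum_add_distrib]
    refine sum_congr rfl fun j _ => ?_
    rw [← sum_add_distrib]
    exact sum_congr rfl fun k _ => by ring
  have hint : ∀ j k, Integrable fun x => m j * m k *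
      (peakon (X j) x * peakon (X k) x + peakonDeriv (X j) x * peakonDeriv (X k) x) :=
    fun j k => (integrable_peakon_mul_add_peakonDeriv_mul _ _).const_mul _
  simp_rw [hexpand]
  rw [integral_finsetSum _ fun j _ => integrable_finsetSum _ fun k _ => hint j k]
  refine sum_congr rfl fun j _ => ?_
  rw [integral_finsetSum _ fun k _ => hint j k]
  refine sum_congr rfl fun k _ => ?_
  rw [integral_const_mul, integral_peakon_mul_add_peakonDeriv_mul]
  ring

end PeakonSum

theorem n_peakon_H1_norm_sq_general
    (n : ℕ) (m : Fin n → ℝ) (X : Fin n → ℝ)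
    (u ux : ℝ → ℝ)
    (hu : ∀ x, u x = ∑ j, m j * Real.exp (-|x - X j|))
    (hux : ∀ x, (∀ j, x ≠ X j) → HasDerivAt u (ux x) x) :
    (∫ x : ℝ, (u x ^ 2 + ux x ^ 2)) = ∑ j, 2 * m j * u (X j) ∧
    (∫ x : ℝ, (u x ^ 2 + ux x ^ 2)) =
      ∑ j, ∑ k, 2 * m j * m k * Real.exp (-|X j - X k|) := by
  have hu' : u = fun y => ∑ j, m j * peakon (X j) y := funext hu
  have hae : (fun x => u x ^ 2 + ux x ^ 2) =ᵐ[volume]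
      fun x => (∑ j, m j * peakon (X j) x) ^ 2 + (∑ j, m j * peakonDeriv (X j) x) ^ 2 := by
    filter_upwards [(finite_range X).countable.ae_notMem volume] with x hx
    have hx' : ∀ j, x ≠ X j := fun j h => hx ⟨j, h.symm⟩
    rw [(hux x hx').unique (hu' ▸ hasDerivAt_sum_peakon m X hx'), hu']
  have hH1 := (integral_congr_ae hae).trans (integral_sq_sum_peakon_add_sq_sum_peakonDeriv m X)
  refine ⟨hH1.trans (sum_congr rfl fun j _ => ?_), hH1⟩
  rw [hu, mul_sum]
  exact sum_congr rfl fun k _ => by ring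

/-- For the `n`-peakon function with distinct sites, the squared `H¹` norm equals
`∑ⱼ 2 mⱼ u(xⱼ) = ∑ⱼₖ 2 mⱼ mₖ e^{-|xⱼ - xₖ|}`. -/
theorem n_peakon_H1_norm_sq
    (n : ℕ) (m : Fin n → ℝ) (X : Fin n → ℝ)
    (hX : Function.Injective X)
    (u ux : ℝ → ℝ)
    (hu : ∀ x, u x = ∑ j, m j * Real.exp (-|x - X j|))
    (hux : ∀ x, (∀ j, x ≠ X j) → HasDerivAt u (ux x) x) :
    (∫ x : ℝ, (u x ^ 2 + ux x ^ 2)) = ∑ j, 2 * m j * u (X j) ∧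
    (∫ x : ℝ, (u x ^ 2 + ux x ^ 2)) =
      ∑ j, ∑ k, 2 * m j * m k * Real.exp (-|X j - X k|) :=
  n_peakon_H1_norm_sq_general n m X u ux hu hux
end

section
/- (Non-conservation of H¹ norm for the conservative weak two-peakon solution.) Let x₁(t) < x₂(t) evolve by ẋ₁ = (2/3)m₁² + 2m₁m₂e^{x₁−x₂}, ẋ₂ = (2/3)m₂² + 2m₁m₂e^{x₁−x₂} with positive constants m₁ ≠ m₂. Then the function H(t) = 2(m₁² + m₂²) + 4m₁m₂e^{x₁(t)−x₂(t)} satisfies dH/dt = (8/3)m₁m₂(m₁² − m₂²)e^{x₁−x₂} ≠ 0. -/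
open Real

/-!
Both peakons receive the same interaction drift `2 m₁ m₂ e^{x₁ - x₂}`, so it cancels in
`x₁ - x₂`, which therefore moves at the constant speed `(2/3)(m₁² - m₂²)`. The chain rule then
gives `dH/dt = 4 m₁ m₂ · (2/3)(m₁² - m₂²) e^{x₁ - x₂}`, which vanishes only when `m₁² = m₂²`,
i.e. (for positive masses) only when `m₁ = m₂`.
-/

theorem hasDerivWithinAt_sub_of_common_drift {x₁ x₂ : ℝ → ℝ} {s : Set ℝ} {t a b c : ℝ}
    (h₁ : HasDerivWithinAt x₁ (a + c) s t) (h₂ : HasDerivWithinAt x₂ (b + c) s t) :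
    HasDerivWithinAt (fun t => x₁ t - x₂ t) (a - b) s t :=
  (h₁.sub h₂).congr_deriv (by ring)

theorem hasDerivWithinAt_const_add_mul_exp_sub_of_common_drift {x₁ x₂ : ℝ → ℝ} {s : Set ℝ}
    {t a b c k₀ k : ℝ}
    (h₁ : HasDerivWithinAt x₁ (a + c) s t) (h₂ : HasDerivWithinAt x₂ (b + c) s t) :
    HasDerivWithinAt (fun t => k₀ + k * exp (x₁ t - x₂ t))
      (k * (a - b) * exp (x₁ t - x₂ t)) s t :=
  (((hasDerivWithinAt_sub_of_common_drift h₁ h₂).exp.const_mul k).const_add k₀).congr_deriv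
    (by ring)

theorem sq_sub_sq_ne_zero_of_nonneg {a b : ℝ} (ha : 0 ≤ a) (hb : 0 ≤ b) (hab : a ≠ b) :
    a ^ 2 - b ^ 2 ≠ 0 :=
  sub_ne_zero.2 fun h => hab ((sq_eq_sq₀ ha hb).1 h)

theorem two_peakon_weak_H1_not_conserved_general
    (m₁ m₂ : ℝ) (hm₁ : 0 < m₁) (hm₂ : 0 < m₂) (hne : m₁ ≠ m₂)
    (I : Set ℝ) (x₁ x₂ : ℝ → ℝ)
    (h₁ : ∀ t ∈ I, HasDerivWithinAt x₁
      ((2 / 3) * m₁ ^ 2 + 2 * m₁ * m₂ * Real.exp (x₁ t - x₂ t)) I t)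
    (h₂ : ∀ t ∈ I, HasDerivWithinAt x₂
      ((2 / 3) * m₂ ^ 2 + 2 * m₁ * m₂ * Real.exp (x₁ t - x₂ t)) I t) :
    ∀ t ∈ I,
      HasDerivWithinAt (fun t => 2 * (m₁ ^ 2 + m₂ ^ 2)
          + 4 * m₁ * m₂ * Real.exp (x₁ t - x₂ t))
        ((8 / 3) * m₁ * m₂ * (m₁ ^ 2 - m₂ ^ 2) * Real.exp (x₁ t - x₂ t)) I t ∧
      (8 / 3) * m₁ * m₂ * (m₁ ^ 2 - m₂ ^ 2) * Real.exp (x₁ t - x₂ t) ≠ 0 := by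
  intro t ht
  have hH := hasDerivWithinAt_const_add_mul_exp_sub_of_common_drift (h₁ t ht) (h₂ t ht)
    (k₀ := 2 * (m₁ ^ 2 + m₂ ^ 2)) (k := 4 * m₁ * m₂)
  have hsq : m₁ ^ 2 - m₂ ^ 2 ≠ 0 := sq_sub_sq_ne_zero_of_nonneg hm₁.le hm₂.le hne
  have hexp := exp_pos (x₁ t - x₂ t)
  exact ⟨hH.congr_deriv (by ring), by positivity⟩

/-- Non-conservation of the `H¹` norm for the conservative weak two-peakon solution:
`dH/dt = (8/3) m₁ m₂ (m₁² - m₂²) e^{x₁ - x₂} ≠ 0` when `m₁ ≠ m₂` are positive. -/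
theorem two_peakon_weak_H1_not_conserved
    (m₁ m₂ : ℝ) (hm₁ : 0 < m₁) (hm₂ : 0 < m₂) (hne : m₁ ≠ m₂)
    (I : Set ℝ) (x₁ x₂ : ℝ → ℝ)
    (hord : ∀ t ∈ I, x₁ t < x₂ t)
    (h₁ : ∀ t ∈ I, HasDerivWithinAt x₁
      ((2 / 3) * m₁ ^ 2 + 2 * m₁ * m₂ * Real.exp (x₁ t - x₂ t)) I t)
    (h₂ : ∀ t ∈ I, HasDerivWithinAt x₂
      ((2 / 3) * m₂ ^ 2 + 2 * m₁ * m₂ * Real.exp (x₁ t - x₂ t)) I t) :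
    ∀ t ∈ I,
      HasDerivWithinAt (fun t => 2 * (m₁ ^ 2 + m₂ ^ 2)
          + 4 * m₁ * m₂ * Real.exp (x₁ t - x₂ t))
        ((8 / 3) * m₁ * m₂ * (m₁ ^ 2 - m₂ ^ 2) * Real.exp (x₁ t - x₂ t)) I t ∧
      (8 / 3) * m₁ * m₂ * (m₁ ^ 2 - m₂ ^ 2) * Real.exp (x₁ t - x₂ t) ≠ 0 :=
  two_peakon_weak_H1_not_conserved_general m₁ m₂ hm₁ hm₂ hne I x₁ x₂ h₁ h₂
end

section
/- (Conservation of H¹ norm for n mCH peakons.) Let u be the n-peakon ansatz with constant m_j > 0 and positions x₁(t) < ⋯ < x_n(t) evolving according to ẋ_j = Q(x_j), where Q(x_j) = ⟨u² − uₓ²⟩(x_j). Then d/dt Σ_{j=1}^n 2 m_j u(x_j(t)) = ½ Σ_{j=1}^n [(u² − uₓ²)²](x_j) = 0, i.e., the squared H¹ norm of u is constant in time. -/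
open Real Filter Topology Finset


namespace NPeakonAux

variable {n : ℕ}

noncomputable def AA (m : Fin n → ℝ) (x : Fin n → ℝ → ℝ) (i : ℕ) (s : ℝ) : ℝ :=
  ∑ k ∈ Finset.univ.filter (fun k : Fin n => (k : ℕ) < i), m k * Real.exp (x k s)

noncomputable def BB (m : Fin n → ℝ) (x : Fin n → ℝ → ℝ) (i : ℕ) (s : ℝ) : ℝ :=
  ∑ k ∈ Finset.univ.filter (fun k : Fin n => i ≤ (k : ℕ)), m k * Real.exp (-(x k s))

lemma AA_zero (m : Fin n → ℝ) (x : Fin n → ℝ → ℝ) (s : ℝ) : AA m x 0 s = 0 := by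
  simp [AA]

lemma BB_top (m : Fin n → ℝ) (x : Fin n → ℝ → ℝ) (s : ℝ) : BB m x n s = 0 := by
  unfold BB
  apply Finset.sum_eq_zero
  intro k hk
  simp only [Finset.mem_filter] at hk
  exact absurd hk.2 (by omega)

lemma AA_succ (m : Fin n → ℝ) (x : Fin n → ℝ → ℝ) (j : Fin n) (s : ℝ) :
    AA m x ((j : ℕ) + 1) s = AA m x j s + m j * Real.exp (x j s) := by
  unfold AA
  have h : (Finset.univ.filter (fun k : Fin n => (k : ℕ) < (j : ℕ) + 1))
      = insert j (Finset.univ.filter (fun k : Fin n => (k : ℕ) < (j : ℕ))) := by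
    ext k
    simp only [Finset.mem_filter, Finset.mem_insert, Finset.mem_univ, true_and, Fin.ext_iff]
    omega
  rw [h, Finset.sum_insert (by simp), add_comm]

lemma BB_succ (m : Fin n → ℝ) (x : Fin n → ℝ → ℝ) (j : Fin n) (s : ℝ) :
    BB m x (j : ℕ) s = m j * Real.exp (-(x j s)) + BB m x ((j : ℕ) + 1) s := by
  unfold BB
  have h : (Finset.univ.filter (fun k : Fin n => (j : ℕ) ≤ (k : ℕ)))
      = insert j (Finset.univ.filter (fun k : Fin n => (j : ℕ) + 1 ≤ (k : ℕ))) := by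
    ext k
    simp only [Finset.mem_filter, Finset.mem_insert, Finset.mem_univ, true_and, Fin.ext_iff]
    omega
  rw [h, Finset.sum_insert (by simp)]


lemma u_eval (m : Fin n → ℝ) (x : Fin n → ℝ → ℝ) (i : ℕ) (s y : ℝ)
    (h1 : ∀ k : Fin n, (k : ℕ) < i → x k s ≤ y)
    (h2 : ∀ k : Fin n, i ≤ (k : ℕ) → y ≤ x k s) :
    ∑ k, m k * Real.exp (-|y - x k s|)
      = Real.exp (-y) * AA m x i s + Real.exp y * BB m x i s := by
  unfold AA BB
  rw [Finset.mul_sum, Finset.mul_sum,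
    ← Finset.sum_filter_add_sum_filter_not Finset.univ (fun k : Fin n => (k : ℕ) < i)]
  congr 1
  · refine Finset.sum_congr rfl fun k hk => ?_
    have hk' := h1 k (Finset.mem_filter.mp hk).2
    rw [abs_of_nonneg (by linarith), show -(y - x k s) = x k s + -y by ring,
      Real.exp_add]
    ring
  · rw [show (Finset.univ.filter fun k : Fin n => ¬ (k : ℕ) < i)
        = Finset.univ.filter (fun k : Fin n => i ≤ (k : ℕ)) by
      apply Finset.filter_congr; intro k _; simp [not_lt]]
    refine Finset.sum_congr rfl fun k hk => ?_
    have hk' := h2 k (Finset.mem_filter.mp hk).2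
    rw [abs_of_nonpos (by linarith), show - -(y - x k s) = -(x k s) + y by ring,
      Real.exp_add]
    ring

lemma ux_eval (m : Fin n → ℝ) (x : Fin n → ℝ → ℝ) (i : ℕ) (s y : ℝ)
    (h1 : ∀ k : Fin n, (k : ℕ) < i → x k s < y)
    (h2 : ∀ k : Fin n, i ≤ (k : ℕ) → y < x k s) :
    ∑ k, -m k * Real.sign (y - x k s) * Real.exp (-|y - x k s|)
      = -(Real.exp (-y) * AA m x i s) + Real.exp y * BB m x i s := by
  rw [← Finset.sum_filter_add_sum_filter_not Finset.univ (fun k : Fin n => (k : ℕ) < i)]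
  have hA : ∑ k ∈ Finset.univ.filter (fun k : Fin n => (k : ℕ) < i),
      -m k * Real.sign (y - x k s) * Real.exp (-|y - x k s|)
      = -(Real.exp (-y) * AA m x i s) := by
    unfold AA
    rw [Finset.mul_sum, ← Finset.sum_neg_distrib]
    refine Finset.sum_congr rfl fun k hk => ?_
    have hk' := h1 k (Finset.mem_filter.mp hk).2
    rw [Real.sign_of_pos (by linarith : (0:ℝ) < y - x k s),
      abs_of_nonneg (by linarith), show -(y - x k s) = x k s + -y by ring,
      Real.exp_add]
    ring
  have hB : ∑ k ∈ Finset.univ.filter (fun k : Fin n => ¬ (k : ℕ) < i),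
      -m k * Real.sign (y - x k s) * Real.exp (-|y - x k s|)
      = Real.exp y * BB m x i s := by
    unfold BB
    rw [show (Finset.univ.filter fun k : Fin n => ¬ (k : ℕ) < i)
        = Finset.univ.filter (fun k : Fin n => i ≤ (k : ℕ)) by
      apply Finset.filter_congr; intro k _; simp [not_lt]]
    rw [Finset.mul_sum]
    refine Finset.sum_congr rfl fun k hk => ?_
    have hk' := h2 k (Finset.mem_filter.mp hk).2
    rw [Real.sign_of_neg (by linarith : y - x k s < 0),
      abs_of_nonpos (by linarith), show - -(y - x k s) = -(x k s) + y by ring,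
      Real.exp_add]
    ring
  rw [hA, hB]

lemma Q_eval (m : Fin n → ℝ) (x : Fin n → ℝ → ℝ) (i : ℕ) (s y : ℝ)
    (h1 : ∀ k : Fin n, (k : ℕ) < i → x k s < y)
    (h2 : ∀ k : Fin n, i ≤ (k : ℕ) → y < x k s) :
    (∑ k, m k * Real.exp (-|y - x k s|)) ^ 2
      - (∑ k, -m k * Real.sign (y - x k s) * Real.exp (-|y - x k s|)) ^ 2
      = 4 * AA m x i s * BB m x i s := by
  rw [u_eval m x i s y (fun k hk => (h1 k hk).le) (fun k hk => (h2 k hk).le),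
    ux_eval m x i s y h1 h2]
  have hexp : Real.exp (-y) * Real.exp y = 1 := by
    rw [← Real.exp_add]; simp
  nlinarith [hexp, sq_nonneg (Real.exp (-y)), sq_nonneg (Real.exp y)]


noncomputable def sg (j k : Fin n) : ℝ := if (k : ℕ) ≤ (j : ℕ) then 1 else -1

noncomputable def EE (x : Fin n → ℝ → ℝ) (j k : Fin n) (t : ℝ) : ℝ :=
  Real.exp (-|x j t - x k t|)

lemma EE_symm (x : Fin n → ℝ → ℝ) (j k : Fin n) (t : ℝ) :
    EE x k j t = EE x j k t := by
  rw [EE, EE, abs_sub_comm]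

lemma telescope (f : ℕ → ℝ) (n : ℕ) :
    ∑ j : Fin n, (f ((j : ℕ) + 1) - f (j : ℕ)) = f n - f 0 := by
  rw [Fin.sum_univ_eq_sum_range (fun i => f (i + 1) - f i) n, Finset.sum_range_sub]

lemma J_eval (m : Fin n → ℝ) (x : Fin n → ℝ → ℝ) (t : ℝ)
    (hord : StrictMono (fun j => x j t)) (j : Fin n) :
    ∑ k, m k * (sg k j - sg j k) * EE x j k t
      = -(2 * Real.exp (-(x j t))) * AA m x (j : ℕ) t
        + (2 * Real.exp (x j t)) * BB m x ((j : ℕ) + 1) t := by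
  have step : ∀ k : Fin n, m k * (sg k j - sg j k) * EE x j k t
      = (if (k : ℕ) < (j : ℕ) then
          -(2 * Real.exp (-(x j t))) * (m k * Real.exp (x k t)) else 0)
        + (if (j : ℕ) < (k : ℕ) then
          (2 * Real.exp (x j t)) * (m k * Real.exp (-(x k t))) else 0) := by
    intro k
    rcases lt_trichotomy ((k : ℕ)) ((j : ℕ)) with h | h | h
    · have hx : x k t < x j t := hord (show k < j from h)
      rw [if_pos h, if_neg (by omega), sg, sg, if_neg (by omega), if_pos h.le, EE,
        abs_of_nonneg (by linarith), show -(x j t - x k t) = x k t + -(x j t) by ring,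
        Real.exp_add]
      ring
    · rw [if_neg (by omega), if_neg (by omega), sg, sg, if_pos h.le, if_pos h.ge]
      ring
    · have hx : x j t < x k t := hord (show j < k from h)
      rw [if_neg (by omega), if_pos h, sg, sg, if_pos h.le, if_neg (by omega), EE,
        abs_of_nonpos (by linarith), show - -(x j t - x k t) = x j t + -(x k t) by ring,
        Real.exp_add]
      ring
  rw [Finset.sum_congr rfl (fun k _ => step k), Finset.sum_add_distrib]
  congr 1
  · rw [← Finset.sum_filter, AA, Finset.mul_sum]
  · rw [← Finset.sum_filter, BB, Finset.mul_sum]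
    apply Finset.sum_congr
    · apply Finset.filter_congr; intro k _; simp
    · intro k _; rfl

end NPeakonAux

/-- Conservation of the `H¹` norm for `n` mCH peakons: if the positions satisfy the
integrable ODEs `ẋⱼ = ⟨u² - uₓ²⟩(xⱼ)`, then
`d/dt ∑ⱼ 2 mⱼ u(xⱼ(t)) = ½ ∑ⱼ [(u² - uₓ²)²](xⱼ) = 0`. -/
theorem n_peakon_H1_conserved
    (n : ℕ) (m : Fin n → ℝ) (hm : ∀ j, 0 < m j)
    (x : Fin n → ℝ → ℝ)
    (hord : ∀ t, StrictMono (fun j => x j t))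
    (u ux : ℝ → ℝ → ℝ)
    (hu : ∀ t y, u t y = ∑ j, m j * Real.exp (-|y - x j t|))
    (hux : ∀ t y, ux t y = ∑ j, -m j * Real.sign (y - x j t) * Real.exp (-|y - x j t|))
    (Qp Qm : Fin n → ℝ → ℝ)
    (hQp : ∀ j t, Tendsto (fun y => u t y ^ 2 - ux t y ^ 2)
      (𝓝[>] x j t) (𝓝 (Qp j t)))
    (hQm : ∀ j t, Tendsto (fun y => u t y ^ 2 - ux t y ^ 2)
      (𝓝[<] x j t) (𝓝 (Qm j t)))
    (hode : ∀ j t, HasDerivAt (x j) ((Qp j t + Qm j t) / 2) t) :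
    ∀ t : ℝ,
      HasDerivAt (fun s => ∑ j, 2 * m j * u s (x j s))
        ((1 / 2) * ∑ j, (Qp j t ^ 2 - Qm j t ^ 2)) t ∧
      (1 / 2) * ∑ j, (Qp j t ^ 2 - Qm j t ^ 2) = 0 := by
  intro t
  open NPeakonAux in
  -- closed form for the one-sided limits
  have keyp : ∀ j : Fin n,
      Qp j t = 4 * AA m x ((j : ℕ) + 1) t * BB m x ((j : ℕ) + 1) t := by
    intro j
    have hev : ∀ᶠ y in 𝓝[>] (x j t),
        u t y ^ 2 - ux t y ^ 2 = 4 * AA m x ((j : ℕ) + 1) t * BB m x ((j : ℕ) + 1) t := by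
      have h2 : ∀ᶠ y in 𝓝 (x j t), ∀ k : Fin n, (j : ℕ) + 1 ≤ (k : ℕ) → y < x k t := by
        rw [Filter.eventually_all]
        intro k
        by_cases hk : (j : ℕ) + 1 ≤ (k : ℕ)
        · have hlt : x j t < x k t := hord t (show j < k from by omega)
          filter_upwards [Iio_mem_nhds hlt] with y hy _
          exact hy
        · filter_upwards with y hy
          exact absurd hy hk
      filter_upwards [self_mem_nhdsWithin,
        eventually_nhdsWithin_of_eventually_nhds h2] with y hy1 hy2
      rw [hu, hux]
      refine Q_eval m x ((j : ℕ) + 1) t y (fun k hk => ?_) hy2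
      exact lt_of_le_of_lt ((hord t).monotone (show k ≤ j from by omega)) hy1
    exact tendsto_nhds_unique (hQp j t)
      (Filter.Tendsto.congr' (by filter_upwards [hev] with y h; exact h.symm)
        tendsto_const_nhds)
  have keym : ∀ j : Fin n,
      Qm j t = 4 * AA m x (j : ℕ) t * BB m x (j : ℕ) t := by
    intro j
    have hev : ∀ᶠ y in 𝓝[<] (x j t),
        u t y ^ 2 - ux t y ^ 2 = 4 * AA m x (j : ℕ) t * BB m x (j : ℕ) t := by
      have h2 : ∀ᶠ y in 𝓝 (x j t), ∀ k : Fin n, (k : ℕ) < (j : ℕ) → x k t < y := by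
        rw [Filter.eventually_all]
        intro k
        by_cases hk : (k : ℕ) < (j : ℕ)
        · have hlt : x k t < x j t := hord t (show k < j from hk)
          filter_upwards [Ioi_mem_nhds hlt] with y hy _
          exact hy
        · filter_upwards with y hy
          exact absurd hy hk
      filter_upwards [self_mem_nhdsWithin,
        eventually_nhdsWithin_of_eventually_nhds h2] with y hy1 hy2
      rw [hu, hux]
      refine Q_eval m x (j : ℕ) t y hy2 (fun k hk => ?_)
      exact lt_of_lt_of_le hy1 ((hord t).monotone (show j ≤ k from by omega))
    exact tendsto_nhds_unique (hQm j t)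
      (Filter.Tendsto.congr' (by filter_upwards [hev] with y h; exact h.symm)
        tendsto_const_nhds)
  -- part 2 : the sum of jumps vanishes (telescoping)
  have hzero : ∑ j : Fin n, (Qp j t ^ 2 - Qm j t ^ 2) = 0 := by
    have h1 : ∑ j : Fin n, (Qp j t ^ 2 - Qm j t ^ 2)
        = ∑ j : Fin n, ((fun i : ℕ => (4 * AA m x i t * BB m x i t) ^ 2) ((j : ℕ) + 1)
            - (fun i : ℕ => (4 * AA m x i t * BB m x i t) ^ 2) (j : ℕ)) := by
      refine Finset.sum_congr rfl fun j _ => ?_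
      rw [keyp j, keym j]
    rw [h1, telescope (fun i : ℕ => (4 * AA m x i t * BB m x i t) ^ 2) n,
      AA_zero, BB_top]
    ring
  refine ⟨?_, by rw [hzero]; ring⟩
  -- velocities
  have hvel : ∀ j : Fin n, HasDerivAt (x j)
      (2 * (AA m x ((j : ℕ) + 1) t * BB m x ((j : ℕ) + 1) t
        + AA m x (j : ℕ) t * BB m x (j : ℕ) t)) t := by
    intro j
    have h := hode j t
    rw [keyp j, keym j] at h
    convert h using 1
    ring
  -- abbreviation for velocity
  set v : Fin n → ℝ := fun j => 2 * (AA m x ((j : ℕ) + 1) t * BB m x ((j : ℕ) + 1) t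
    + AA m x (j : ℕ) t * BB m x (j : ℕ) t) with hvdef
  -- rewrite the functional as a smooth double sum
  have habs : ∀ (j k : Fin n) (s : ℝ), |x j s - x k s|
      = (if (k : ℕ) ≤ (j : ℕ) then x j s - x k s else x k s - x j s) := by
    intro j k s
    by_cases h : (k : ℕ) ≤ (j : ℕ)
    · rw [if_pos h]
      exact abs_of_nonneg (sub_nonneg.mpr ((hord s).monotone (show k ≤ j from h)))
    · rw [if_neg h, abs_of_neg (sub_neg.mpr (hord s (show j < k from by omega)))]
      ring
  have hfun : (fun s => ∑ j, 2 * m j * u s (x j s))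
      = (fun s => ∑ j : Fin n, ∑ k : Fin n, (2 * m j * m k) *
          Real.exp (-(if (k : ℕ) ≤ (j : ℕ) then x j s - x k s else x k s - x j s))) := by
    funext s
    refine Finset.sum_congr rfl fun j _ => ?_
    rw [hu, Finset.mul_sum]
    refine Finset.sum_congr rfl fun k _ => ?_
    rw [← habs j k s]
    ring
  -- derivative of each term
  have hterm : ∀ j k : Fin n, HasDerivAt
      (fun s => (2 * m j * m k) *
        Real.exp (-(if (k : ℕ) ≤ (j : ℕ) then x j s - x k s else x k s - x j s)))
      ((2 * m j * m k) *
        ((if (k : ℕ) ≤ (j : ℕ) then v k - v j else v j - v k) * EE x j k t)) t := by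
    intro j k
    by_cases h : (k : ℕ) ≤ (j : ℕ)
    · simp only [if_pos h]
      have hd := (((hvel j).fun_sub (hvel k)).fun_neg.exp).const_mul (2 * m j * m k)
      refine hd.congr_deriv ?_
      rw [EE, habs j k t, if_pos h, hvdef]
      ring
    · simp only [if_neg h]
      have hd := (((hvel k).fun_sub (hvel j)).fun_neg.exp).const_mul (2 * m j * m k)
      refine hd.congr_deriv ?_
      rw [EE, habs j k t, if_neg h, hvdef]
      ring
  have hder : HasDerivAt (fun s => ∑ j, 2 * m j * u s (x j s))
      (∑ j : Fin n, ∑ k : Fin n, (2 * m j * m k) *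
        ((if (k : ℕ) ≤ (j : ℕ) then v k - v j else v j - v k) * EE x j k t)) t := by
    rw [hfun]
    exact HasDerivAt.fun_sum (fun j _ => HasDerivAt.fun_sum (fun k _ => hterm j k))
  -- the derivative value vanishes
  have hS : (∑ j : Fin n, ∑ k : Fin n, (2 * m j * m k) *
      ((if (k : ℕ) ≤ (j : ℕ) then v k - v j else v j - v k) * EE x j k t)) = 0 := by
    have hsplit : ∀ j k : Fin n, (2 * m j * m k) *
        ((if (k : ℕ) ≤ (j : ℕ) then v k - v j else v j - v k) * EE x j k t)
        = (2 * m j * m k) * sg j k * v k * EE x j k t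
          - (2 * m j * m k) * sg j k * v j * EE x j k t := by
      intro j k
      rw [sg]
      by_cases h : (k : ℕ) ≤ (j : ℕ) <;> simp only [if_pos, if_neg, h, if_true,
        if_false] <;> ring
    have h1 : (∑ j : Fin n, ∑ k : Fin n, (2 * m j * m k) *
        ((if (k : ℕ) ≤ (j : ℕ) then v k - v j else v j - v k) * EE x j k t))
        = (∑ j : Fin n, ∑ k : Fin n, (2 * m j * m k) * sg j k * v k * EE x j k t)
          - (∑ j : Fin n, ∑ k : Fin n, (2 * m j * m k) * sg j k * v j * EE x j k t) := by
      rw [← Finset.sum_sub_distrib]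
      refine Finset.sum_congr rfl fun j _ => ?_
      rw [← Finset.sum_sub_distrib]
      exact Finset.sum_congr rfl fun k _ => hsplit j k
    have h2 : (∑ j : Fin n, ∑ k : Fin n, (2 * m j * m k) * sg j k * v k * EE x j k t)
        = (∑ j : Fin n, ∑ k : Fin n, (2 * m k * m j) * sg k j * v j * EE x k j t) :=
      Finset.sum_comm
    rw [h1, h2, ← Finset.sum_sub_distrib]
    have h3 : ∀ j : Fin n,
        ((∑ k : Fin n, (2 * m k * m j) * sg k j * v j * EE x k j t)
          - ∑ k : Fin n, (2 * m j * m k) * sg j k * v j * EE x j k t)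
        = (2 * v j * m j) * ∑ k : Fin n, m k * (sg k j - sg j k) * EE x j k t := by
      intro j
      rw [Finset.mul_sum, ← Finset.sum_sub_distrib]
      refine Finset.sum_congr rfl fun k _ => ?_
      rw [EE_symm x j k t]
      ring
    have h4 : ∀ j : Fin n,
        (2 * v j * m j) * (∑ k : Fin n, m k * (sg k j - sg j k) * EE x j k t)
        = (fun i : ℕ => 8 * (AA m x i t * BB m x i t) ^ 2) ((j : ℕ) + 1)
          - (fun i : ℕ => 8 * (AA m x i t * BB m x i t) ^ 2) (j : ℕ) := by
      intro j
      rw [J_eval m x t (hord t) j, hvdef]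
      simp only
      have e1 := AA_succ m x j t
      have e2 := BB_succ m x j t
      linear_combination
        (-(8 * (AA m x ((j:ℕ)+1) t * BB m x ((j:ℕ)+1) t
            + AA m x (j:ℕ) t * BB m x (j:ℕ) t) * BB m x ((j:ℕ)+1) t)) * e1
        + (8 * (AA m x ((j:ℕ)+1) t * BB m x ((j:ℕ)+1) t
            + AA m x (j:ℕ) t * BB m x (j:ℕ) t) * AA m x (j:ℕ) t) * e2
    calc (∑ j : Fin n,
          ((∑ k : Fin n, (2 * m k * m j) * sg k j * v j * EE x k j t)
            - ∑ k : Fin n, (2 * m j * m k) * sg j k * v j * EE x j k t))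
        = ∑ j : Fin n, ((fun i : ℕ => 8 * (AA m x i t * BB m x i t) ^ 2) ((j : ℕ) + 1)
            - (fun i : ℕ => 8 * (AA m x i t * BB m x i t) ^ 2) (j : ℕ)) := by
          refine Finset.sum_congr rfl fun j _ => ?_
          rw [h3 j, h4 j]
      _ = 0 := by
          rw [telescope (fun i : ℕ => 8 * (AA m x i t * BB m x i t) ^ 2) n,
            AA_zero, BB_top]
          ring
  have hval : (1 / 2) * ∑ j : Fin n, (Qp j t ^ 2 - Qm j t ^ 2)
      = (∑ j : Fin n, ∑ k : Fin n, (2 * m j * m k) *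
        ((if (k : ℕ) ≤ (j : ℕ) then v k - v j else v j - v k) * EE x j k t)) := by
    rw [hS, hzero]
    ring
  rw [hval]
  exact hder
end

section
/- For the n-peakon function u = Σ_{j=1}^n m_j e^{−|x−x_j|} with x₁ < ⋯ < x_n, the average of Q = u² − uₓ² at x_j is given by ⟨Q⟩(x_j) = 2 Σ_{k≠j} m_j m_k e^{−|x_j−x_k|} + 4 Σ_{i<j<k} m_i m_k e^{−|x_i−x_k|}. -/
open Real Filter Topology Finset

/-- For the `n`-peakon function, the average of `Q = u² - uₓ²` at `xⱼ` equals
`2 ∑_{k≠j} mⱼ mₖ e^{-|xⱼ-xₖ|} + 4 ∑_{i<j<k} mᵢ mₖ e^{-|xᵢ-xₖ|}`. -/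
theorem n_peakon_Q_average
    (n : ℕ) (m : Fin n → ℝ) (X : Fin n → ℝ) (hX : StrictMono X)
    (u ux Q : ℝ → ℝ)
    (hu : ∀ x, u x = ∑ j, m j * Real.exp (-|x - X j|))
    (hux : ∀ x, ux x = ∑ j, -m j * Real.sign (x - X j) * Real.exp (-|x - X j|))
    (hQ : ∀ x, Q x = u x ^ 2 - ux x ^ 2)
    (j : Fin n) (Qp Qm : ℝ)
    (hQp : Tendsto Q (𝓝[>] X j) (𝓝 Qp))
    (hQm : Tendsto Q (𝓝[<] X j) (𝓝 Qm)) :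
    (Qp + Qm) / 2 =
      2 * ∑ k ∈ Finset.univ.erase j, m j * m k * Real.exp (-|X j - X k|) +
      4 * ∑ i, ∑ k, (if i < j ∧ j < k then m i * m k * Real.exp (-|X i - X k|) else 0) := by
  have hQ' : Q = fun x => (∑ k, m k * Real.exp (-|x - X k|)) ^ 2 -
      (∑ k, -m k * Real.sign (x - X k) * Real.exp (-|x - X k|)) ^ 2 := by
    funext x; rw [hQ, hu, hux]
  have contf : Continuous fun x : ℝ => ∑ k, m k * Real.exp (-|x - X k|) :=
    continuous_finset_sum _ fun k _ => continuous_const.mul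
      (Real.continuous_exp.comp ((continuous_id.sub continuous_const).abs.neg))
  -- continuous sign-frozen versions of ux
  have contg : ∀ s : Fin n → ℝ,
      Continuous fun x : ℝ => ∑ k, -m k * s k * Real.exp (-|x - X k|) :=
    fun s => continuous_finset_sum _ fun k _ => continuous_const.mul
      (Real.continuous_exp.comp ((continuous_id.sub continuous_const).abs.neg))
  -- eventual sign on the right
  have hsR : ∀ᶠ x in 𝓝[>] X j, ∀ k : Fin n,
      Real.sign (x - X k) = (if k ≤ j then (1:ℝ) else -1) := by
    rw [Filter.eventually_all]
    intro k
    by_cases hk : k ≤ j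
    · filter_upwards [self_mem_nhdsWithin] with x hx
      have h1 : X k ≤ X j := hX.monotone hk
      have hx' : X j < x := hx
      rw [Real.sign_of_pos (by linarith), if_pos hk]
    · have hlt : X j < X k := hX (lt_of_not_ge hk)
      filter_upwards [mem_nhdsWithin_of_mem_nhds (Iio_mem_nhds hlt)] with x hx
      rw [Real.sign_of_neg (by simp only [Set.mem_Iio] at hx; linarith), if_neg hk]
  -- eventual sign on the left
  have hsL : ∀ᶠ x in 𝓝[<] X j, ∀ k : Fin n,
      Real.sign (x - X k) = (if k < j then (1:ℝ) else -1) := by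
    rw [Filter.eventually_all]
    intro k
    by_cases hk : k < j
    · have hlt : X k < X j := hX hk
      filter_upwards [mem_nhdsWithin_of_mem_nhds (Ioi_mem_nhds hlt)] with x hx
      rw [Real.sign_of_pos (by simp only [Set.mem_Ioi] at hx; linarith), if_pos hk]
    · have h1 : X j ≤ X k := hX.monotone (not_lt.mp hk)
      filter_upwards [self_mem_nhdsWithin] with x hx
      have hx' : x < X j := hx
      rw [Real.sign_of_neg (by linarith), if_neg hk]
  -- limits
  have key : ∀ (F : Filter ℝ) (L : ℝ) (s : Fin n → ℝ), F ≤ 𝓝 (X j) →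
      (∀ᶠ x in F, ∀ k : Fin n, Real.sign (x - X k) = s k) →
      Tendsto Q F (𝓝 ((∑ k, m k * Real.exp (-|X j - X k|)) ^ 2 -
        (∑ k, -m k * s k * Real.exp (-|X j - X k|)) ^ 2)) := by
    intro F L s hF hs
    rw [hQ']
    have h1 : Tendsto (fun x => ∑ k, m k * Real.exp (-|x - X k|)) F
        (𝓝 (∑ k, m k * Real.exp (-|X j - X k|))) :=
      (contf.tendsto (X j)).mono_left hF
    have h2 : Tendsto (fun x => ∑ k, -m k * Real.sign (x - X k) * Real.exp (-|x - X k|)) F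
        (𝓝 (∑ k, -m k * s k * Real.exp (-|X j - X k|))) := by
      refine Tendsto.congr' ?_ (((contg s).tendsto (X j)).mono_left hF)
      filter_upwards [hs] with x hx
      exact Finset.sum_congr rfl fun k _ => by rw [hx k]
    exact (h1.pow 2).sub (h2.pow 2)
  have hQpv : Qp = (∑ k, m k * Real.exp (-|X j - X k|)) ^ 2 -
      (∑ k, -m k * (if k ≤ j then (1:ℝ) else -1) * Real.exp (-|X j - X k|)) ^ 2 :=
    tendsto_nhds_unique hQp (key _ Qp _ nhdsWithin_le_nhds hsR)
  have hQmv : Qm = (∑ k, m k * Real.exp (-|X j - X k|)) ^ 2 -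
      (∑ k, -m k * (if k < j then (1:ℝ) else -1) * Real.exp (-|X j - X k|)) ^ 2 :=
    tendsto_nhds_unique hQm (key _ Qm _ nhdsWithin_le_nhds hsL)
  -- algebra
  set a : Fin n → ℝ := fun k => m k * Real.exp (-|X j - X k|) with ha
  have hsplit : ∀ g : Fin n → ℝ, ∑ k, g k =
      (∑ k ∈ univ.filter (· < j), g k) + g j + ∑ k ∈ univ.filter (j < ·), g k := by
    intro g
    have h : ∀ k : Fin n, g k = (if k < j then g k else 0) + (if k = j then g k else 0) +
        (if j < k then g k else 0) := by
      intro k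
      rcases lt_trichotomy k j with h | h | h
      · simp [h, h.ne, asymm h]
      · simp [h]
      · simp [h, h.ne', asymm h]
    calc ∑ k, g k = ∑ k, ((if k < j then g k else 0) + (if k = j then g k else 0) +
        (if j < k then g k else 0)) := Finset.sum_congr rfl fun k _ => h k
      _ = _ := by
        rw [Finset.sum_add_distrib, Finset.sum_add_distrib, Finset.sum_ite_eq' univ j g,
          if_pos (mem_univ j), Finset.sum_filter, Finset.sum_filter]
  set SL : ℝ := ∑ k ∈ univ.filter (· < j), a k with hSL
  set SR : ℝ := ∑ k ∈ univ.filter (j < ·), a k with hSR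
  have haj : a j = m j := by simp [ha]
  have hF : (∑ k, m k * Real.exp (-|X j - X k|)) = SL + a j + SR := hsplit a
  have hR : (∑ k, -m k * (if k ≤ j then (1:ℝ) else -1) * Real.exp (-|X j - X k|))
      = -SL - a j + SR := by
    rw [hsplit fun k => -m k * (if k ≤ j then (1:ℝ) else -1) * Real.exp (-|X j - X k|)]
    rw [hSL, hSR]
    rw [← Finset.sum_neg_distrib]
    congr 1
    · congr 1
      · exact Finset.sum_congr rfl fun k hk => by
          have : k ≤ j := le_of_lt (Finset.mem_filter.mp hk).2
          simp [this, ha]; try ring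
      · simp [ha]; try ring
    · exact Finset.sum_congr rfl fun k hk => by
        have : ¬ k ≤ j := not_le.mpr (Finset.mem_filter.mp hk).2
        simp [this, ha]; try ring
  have hR' : (∑ k, -m k * (if k < j then (1:ℝ) else -1) * Real.exp (-|X j - X k|))
      = -SL + a j + SR := by
    rw [hsplit fun k => -m k * (if k < j then (1:ℝ) else -1) * Real.exp (-|X j - X k|)]
    rw [hSL, hSR]
    rw [← Finset.sum_neg_distrib]
    congr 1
    · congr 1
      · exact Finset.sum_congr rfl fun k hk => by
          have : k < j := (Finset.mem_filter.mp hk).2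
          simp [this, ha]; try ring
      · simp [ha]
    · exact Finset.sum_congr rfl fun k hk => by
        have : ¬ k < j := asymm (Finset.mem_filter.mp hk).2
        simp [this, ha]; try ring
  -- RHS first sum
  have hErase : (∑ k ∈ Finset.univ.erase j, m j * m k * Real.exp (-|X j - X k|))
      = m j * (SL + SR) := by
    have h1 : (∑ k ∈ Finset.univ.erase j, m j * m k * Real.exp (-|X j - X k|))
        = (∑ k, m j * m k * Real.exp (-|X j - X k|)) - m j * m j * Real.exp (-|X j - X j|) :=
      Finset.sum_erase_eq_sub (mem_univ j)
    rw [h1, hsplit fun k => m j * m k * Real.exp (-|X j - X k|)]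
    have h2 : ∀ s : Finset (Fin n), (∑ k ∈ s, m j * m k * Real.exp (-|X j - X k|))
        = m j * ∑ k ∈ s, a k := by
      intro s; rw [Finset.mul_sum]; exact Finset.sum_congr rfl fun k _ => by rw [ha]; ring
    rw [h2, h2, ← hSL, ← hSR]
    simp
    ring
  -- RHS double sum
  have hDouble : (∑ i, ∑ k, (if i < j ∧ j < k then m i * m k * Real.exp (-|X i - X k|) else 0))
      = SL * SR := by
    have step1 : (∑ i, ∑ k, (if i < j ∧ j < k then m i * m k * Real.exp (-|X i - X k|) else 0))
        = ∑ i ∈ univ.filter (· < j), ∑ k ∈ univ.filter (j < ·),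
            m i * m k * Real.exp (-|X i - X k|) := by
      rw [Finset.sum_filter]
      refine Finset.sum_congr rfl fun i _ => ?_
      by_cases hi : i < j
      · rw [if_pos hi, Finset.sum_filter]
        exact Finset.sum_congr rfl fun k _ => by by_cases hk : j < k <;> simp [hi, hk]
      · rw [if_neg hi]
        simp [hi]
    rw [step1, hSL, hSR, Finset.sum_mul_sum]
    refine Finset.sum_congr rfl fun i hi => Finset.sum_congr rfl fun k hk => ?_
    have hi' : i < j := (Finset.mem_filter.mp hi).2
    have hk' : j < k := (Finset.mem_filter.mp hk).2
    have h1 : X i < X j := hX hi'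
    have h2 : X j < X k := hX hk'
    have h3 : X i < X k := h1.trans h2
    rw [ha]
    simp only
    rw [abs_of_neg (sub_neg.mpr h3), abs_of_pos (sub_pos.mpr h1),
      abs_of_neg (sub_neg.mpr h2)]
    have he : Real.exp (-(-(X i - X k))) = Real.exp (-(X j - X i)) * Real.exp (-(-(X j - X k))) := by
      rw [← Real.exp_add]; ring_nf
    rw [he]; ring
  rw [hQpv, hQmv, hF, hR, hR', haj, hErase, hDouble]
  ring
end

section
/- For the two-peakon function u with x₁ < x₂, the average ⟨u² − uₓ²⟩ at x₁ equals 2m₁m₂e^{x₁−x₂}, and likewise at x₂. Hence the integrable peakon ODE ẋ_j = ⟨u² − uₓ²⟩(x_j) gives ẋ₁ = ẋ₂ = 2m₁m₂e^{x₁−x₂}. -/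
open Real Filter Topology

/-- For the two-peakon function with `x₁ < x₂`, the average `⟨u² - uₓ²⟩` equals
`2 m₁ m₂ e^{x₁ - x₂}` both at `x₁` and at `x₂`; hence the integrable peakon ODE
`ẋⱼ = ⟨u² - uₓ²⟩(xⱼ)` gives `ẋ₁ = ẋ₂ = 2 m₁ m₂ e^{x₁ - x₂}`. -/
theorem two_peakon_Q_averages
    (m₁ m₂ x₁ x₂ : ℝ) (hx : x₁ < x₂)
    (u ux Q : ℝ → ℝ)
    (hu : ∀ x, u x = m₁ * Real.exp (-|x - x₁|) + m₂ * Real.exp (-|x - x₂|))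
    (hux : ∀ x, ux x = -m₁ * Real.sign (x - x₁) * Real.exp (-|x - x₁|)
      - m₂ * Real.sign (x - x₂) * Real.exp (-|x - x₂|))
    (hQ : ∀ x, Q x = u x ^ 2 - ux x ^ 2)
    (Qp₁ Qm₁ Qp₂ Qm₂ : ℝ)
    (hQp₁ : Tendsto Q (𝓝[>] x₁) (𝓝 Qp₁))
    (hQm₁ : Tendsto Q (𝓝[<] x₁) (𝓝 Qm₁))
    (hQp₂ : Tendsto Q (𝓝[>] x₂) (𝓝 Qp₂))
    (hQm₂ : Tendsto Q (𝓝[<] x₂) (𝓝 Qm₂)) :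
    (Qp₁ + Qm₁) / 2 = 2 * m₁ * m₂ * Real.exp (x₁ - x₂) ∧
    (Qp₂ + Qm₂) / 2 = 2 * m₁ * m₂ * Real.exp (x₁ - x₂) := by
  set c : ℝ := 4 * m₁ * m₂ * Real.exp (x₁ - x₂) with hc
  have Qmid : ∀ x, x₁ < x → x < x₂ → Q x = c := by
    intro x h1 h2
    rw [hQ, hu, hux, Real.sign_of_pos (by linarith : (0:ℝ) < x - x₁),
      Real.sign_of_neg (by linarith : x - x₂ < 0),
      abs_of_pos (by linarith : (0:ℝ) < x - x₁),
      abs_of_neg (by linarith : x - x₂ < 0)]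
    have h : Real.exp (-(x - x₁)) * Real.exp (- -(x - x₂)) = Real.exp (x₁ - x₂) := by
      rw [← Real.exp_add]; ring_nf
    rw [hc]
    linear_combination 4 * m₁ * m₂ * h
  have Qout : ∀ x, (x < x₁ ∨ x₂ < x) → Q x = 0 := by
    rintro x (h | h)
    · rw [hQ, hu, hux, Real.sign_of_neg (by linarith : x - x₁ < 0),
        Real.sign_of_neg (by linarith : x - x₂ < 0)]
      ring
    · rw [hQ, hu, hux, Real.sign_of_pos (by linarith : (0:ℝ) < x - x₁),
        Real.sign_of_pos (by linarith : (0:ℝ) < x - x₂)]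
      ring
  have hp₁ : Qp₁ = c := by
    have : Tendsto Q (𝓝[>] x₁) (𝓝 c) := by
      refine tendsto_const_nhds.congr' ?_
      filter_upwards [Ioo_mem_nhdsGT_of_mem ⟨le_refl x₁, hx⟩] with x hxm
      exact (Qmid x hxm.1 hxm.2).symm
    exact tendsto_nhds_unique hQp₁ this
  have hm₁ : Qm₁ = 0 := by
    have : Tendsto Q (𝓝[<] x₁) (𝓝 0) := by
      refine tendsto_const_nhds.congr' ?_
      filter_upwards [self_mem_nhdsWithin] with x hxm
      exact (Qout x (Or.inl hxm)).symm
    exact tendsto_nhds_unique hQm₁ this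
  have hm₂ : Qm₂ = c := by
    have : Tendsto Q (𝓝[<] x₂) (𝓝 c) := by
      refine tendsto_const_nhds.congr' ?_
      filter_upwards [Ioo_mem_nhdsLT_of_mem ⟨hx, le_refl x₂⟩] with x hxm
      exact (Qmid x hxm.1 hxm.2).symm
    exact tendsto_nhds_unique hQm₂ this
  have hp₂ : Qp₂ = 0 := by
    have : Tendsto Q (𝓝[>] x₂) (𝓝 0) := by
      refine tendsto_const_nhds.congr' ?_
      filter_upwards [self_mem_nhdsWithin] with x hxm
      exact (Qout x (Or.inr hxm)).symm
    exact tendsto_nhds_unique hQp₂ this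
  subst hp₁ hm₁ hm₂ hp₂
  constructor <;> · rw [hc]; ring
end

section
/- For a single peakon u = m e^{−|x−x₁|}, the average ⟨u² − uₓ²⟩(x₁) equals 0, so under the integrable peakon ODE ẋ₁ = ⟨u² − uₓ²⟩(x₁) a single mCH peakon is stationary, whereas under the weak-solution ODE ẋ₁ = (2/3)m² + 0 it moves with constant speed (2/3)m². -/
open Real Filter Topology

/-! Away from its crest a peakon satisfies `uₓ = ∓u`, so `u² - uₓ²` vanishes on both sides of `x₁`
and both one-sided limits are `0`; the two ODEs then have constant right-hand sides `0` and
`(2/3) m²`, whose solutions are affine. -/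

theorem Real.sign_sq_of_ne_zero {r : ℝ} (hr : r ≠ 0) : sign r ^ 2 = 1 := by
  rcases sign_apply_eq_of_ne_zero r hr with h | h <;> simp [h]

theorem peakon_sq_sub_deriv_sq_eq_zero (m : ℝ) {x x₁ : ℝ} (hx : x ≠ x₁) :
    (m * exp (-|x - x₁|)) ^ 2 - (-m * sign (x - x₁) * exp (-|x - x₁|)) ^ 2 = 0 := by
  have hs := Real.sign_sq_of_ne_zero (sub_ne_zero.mpr hx)
  linear_combination -(m * exp (-|x - x₁|)) ^ 2 * hs

theorem eq_add_mul_of_hasDerivAt_const {y : ℝ → ℝ} {c : ℝ} (hy : ∀ t, HasDerivAt y c t)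
    (t : ℝ) : y t = y 0 + c * t := by
  have hd : ∀ s, HasDerivAt (fun s ↦ y s - c * s) 0 s := fun s ↦
    ((hy s).sub ((hasDerivAt_id s).const_mul c)).congr_deriv (by ring)
  have := is_const_of_deriv_eq_zero (fun s ↦ (hd s).differentiableAt) (fun s ↦ (hd s).deriv) t 0
  simp only [mul_zero, sub_zero] at this
  linarith

theorem single_peakon_stationary_vs_weak_general
    (m x₁ : ℝ)
    (u ux Q : ℝ → ℝ)
    (hu : ∀ x, u x = m * Real.exp (-|x - x₁|))
    (hux : ∀ x, ux x = -m * Real.sign (x - x₁) * Real.exp (-|x - x₁|))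
    (hQ : ∀ x, Q x = u x ^ 2 - ux x ^ 2)
    (Qp Qm : ℝ)
    (hQp : Tendsto Q (𝓝[>] x₁) (𝓝 Qp))
    (hQm : Tendsto Q (𝓝[<] x₁) (𝓝 Qm)) :
    (Qp + Qm) / 2 = 0 ∧
    (∀ y : ℝ → ℝ, (∀ t, HasDerivAt y ((Qp + Qm) / 2) t) → ∀ t, y t = y 0) ∧
    (∀ y : ℝ → ℝ, (∀ t, HasDerivAt y ((2 / 3) * m ^ 2) t) →
      ∀ t, y t = y 0 + (2 / 3) * m ^ 2 * t) := by
  have hQ0 : Q =ᶠ[𝓝[≠] x₁] 0 := eventually_nhdsWithin_of_forall fun x hx ↦ by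
    rw [hQ, hu, hux]
    exact peakon_sq_sub_deriv_sq_eq_zero m hx
  have hQp0 : Qp = 0 := tendsto_nhds_unique_of_eventuallyEq hQp tendsto_const_nhds
    (hQ0.filter_mono (nhdsWithin_mono _ fun _ hx ↦ ne_of_gt hx))
  have hQm0 : Qm = 0 := tendsto_nhds_unique_of_eventuallyEq hQm tendsto_const_nhds
    (hQ0.filter_mono (nhdsWithin_mono _ fun _ hx ↦ ne_of_lt hx))
  have havg : (Qp + Qm) / 2 = 0 := by simp [hQp0, hQm0]
  refine ⟨havg, fun y hy t ↦ ?_, fun y hy ↦ eq_add_mul_of_hasDerivAt_const hy⟩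
  simpa [havg] using eq_add_mul_of_hasDerivAt_const hy t

/-- For a single peakon `u = m e^{-|x - x₁|}`, the average `⟨u² - uₓ²⟩(x₁)` is `0`:
under the integrable ODE `ẋ₁ = ⟨u² - uₓ²⟩(x₁)` the peakon is stationary, whereas under
the weak-solution ODE `ẋ₁ = (2/3) m²` it moves with constant speed `(2/3) m²`. -/
theorem single_peakon_stationary_vs_weak
    (m x₁ : ℝ) (hm : 0 < m)
    (u ux Q : ℝ → ℝ)
    (hu : ∀ x, u x = m * Real.exp (-|x - x₁|))
    (hux : ∀ x, ux x = -m * Real.sign (x - x₁) * Real.exp (-|x - x₁|))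
    (hQ : ∀ x, Q x = u x ^ 2 - ux x ^ 2)
    (Qp Qm : ℝ)
    (hQp : Tendsto Q (𝓝[>] x₁) (𝓝 Qp))
    (hQm : Tendsto Q (𝓝[<] x₁) (𝓝 Qm)) :
    (Qp + Qm) / 2 = 0 ∧
    (∀ y : ℝ → ℝ, (∀ t, HasDerivAt y ((Qp + Qm) / 2) t) → ∀ t, y t = y 0) ∧
    (∀ y : ℝ → ℝ, (∀ t, HasDerivAt y ((2 / 3) * m ^ 2) t) →
      ∀ t, y t = y 0 + (2 / 3) * m ^ 2 * t) :=
  single_peakon_stationary_vs_weak_general m x₁ u ux Q hu hux hQ Qp Qm hQp hQm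
end
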